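/- Suppose U ∈ C^{1,2}([0,t] × P₂(ℝ^d)) solves the backward Kolmogorov PDE (∂_s + ℒ_s)U(s,μ) = 0 on [0,t) × P₂(ℝ^d) with terminal condition U(t,·) = Φ, where ℒ_s U(s,μ) = ∫[ Σᵢ bᵢ(s,v,μ) ∂^i_μ U(s,μ)(v) + (1/2)Σ_{i,j} a_{i,j}(s,v,μ) ∂_{v_j}∂^i_μ U(s,μ)(v) ] μ(dv), and suppose the derivatives of U are bounded. If (X_r^{s,ξ})_{s≤r≤t} is the unique solution of the McKean–Vlasov SDE with coefficients b and σ (a = σσᵀ) started at time s from ξ with law μ, and s ↦ U(s, L(X_s^{0,ξ})) is obtained by Itô's formula along the measure flow, then U(s,μ) = Φ(L(X_t^{s,ξ})) for all (s,μ) ∈ [0,t] × P₂(ℝ^d). In particular, the PDE has at most one solution in this class. -/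
import Mathlib


open MeasureTheory
open scoped ENNReal

/-- A measure is in `P₂(ℝ^d)`: a probability measure with finite second moment. -/
def IsP2 {d : ℕ} (μ : Measure (EuclideanSpace ℝ (Fin d))) : Prop :=
  IsProbabilityMeasure μ ∧ Integrable (fun x => ‖x‖ ^ 2) μ

/-- The operator `ℒ_s` acting on a function of the measure, expressed through its Lions
derivative `DU` and the mixed derivative `DvDU`:
`ℒ_s U(s,μ) = ∫ [ Σᵢ bᵢ ∂^i_μU + (1/2) Σ_{i,j} a_{i,j} ∂_{v_j}∂^i_μU ] dμ`. -/
noncomputable def mvOperator (d : ℕ)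
    (b : ℝ → EuclideanSpace ℝ (Fin d) → Measure (EuclideanSpace ℝ (Fin d)) →
      EuclideanSpace ℝ (Fin d))
    (a : ℝ → EuclideanSpace ℝ (Fin d) → Measure (EuclideanSpace ℝ (Fin d)) →
      Fin d → Fin d → ℝ)
    (DU : ℝ → Measure (EuclideanSpace ℝ (Fin d)) → EuclideanSpace ℝ (Fin d) →
      EuclideanSpace ℝ (Fin d))
    (DvDU : ℝ → Measure (EuclideanSpace ℝ (Fin d)) → EuclideanSpace ℝ (Fin d) →
      Fin d → Fin d → ℝ)
    (s : ℝ) (μ : Measure (EuclideanSpace ℝ (Fin d))) : ℝ :=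
  ∫ v, ((∑ i, b s v μ i * DU s μ v i) +
    (1 / 2) * ∑ i, ∑ j, a s v μ i j * DvDU s μ v i j) ∂μ

/-- Uniqueness / representation for the backward Kolmogorov PDE on Wasserstein space: if
`U ∈ C^{1,2}([0,t] × P₂)` has bounded derivatives, solves `(∂_s + ℒ_s)U = 0` on `[0,t)`
with terminal condition `U(t,·) = Φ`, and Itô's formula holds along the flow of marginal
laws of the McKean–Vlasov SDE (with `flow s μ s = μ`), then
`U(s,μ) = Φ(L(X_t^{s,ξ})) = Φ(flow s μ t)` for all `(s,μ) ∈ [0,t] × P₂`; in particular the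
PDE has at most one such solution. -/
theorem backward_kolmogorov_uniqueness (d : ℕ) (t : ℝ) (ht : 0 ≤ t)
    (b : ℝ → EuclideanSpace ℝ (Fin d) → Measure (EuclideanSpace ℝ (Fin d)) →
      EuclideanSpace ℝ (Fin d))
    (a : ℝ → EuclideanSpace ℝ (Fin d) → Measure (EuclideanSpace ℝ (Fin d)) →
      Fin d → Fin d → ℝ)
    (U dsU : ℝ → Measure (EuclideanSpace ℝ (Fin d)) → ℝ)
    (DU : ℝ → Measure (EuclideanSpace ℝ (Fin d)) → EuclideanSpace ℝ (Fin d) →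
      EuclideanSpace ℝ (Fin d))
    (DvDU : ℝ → Measure (EuclideanSpace ℝ (Fin d)) → EuclideanSpace ℝ (Fin d) →
      Fin d → Fin d → ℝ)
    (Φ : Measure (EuclideanSpace ℝ (Fin d)) → ℝ)
    (flow : ℝ → Measure (EuclideanSpace ℝ (Fin d)) → ℝ →
      Measure (EuclideanSpace ℝ (Fin d)))
    -- the derivatives of `U` are bounded
    (hbdd : ∃ M : ℝ, ∀ s μ v i j, ‖DU s μ v‖ ≤ M ∧ |DvDU s μ v i j| ≤ M ∧ |dsU s μ| ≤ M)
    -- `dsU` is the time derivative of `U` at frozen measure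
    (hds : ∀ μ, IsP2 μ → ∀ s ∈ Set.Icc (0 : ℝ) t, HasDerivAt (fun r => U r μ) (dsU s μ) s)
    -- `U` solves the backward Kolmogorov PDE on `[0,t)`
    (hPDE : ∀ s ∈ Set.Ico (0 : ℝ) t, ∀ μ, IsP2 μ →
      dsU s μ + mvOperator d b a DU DvDU s μ = 0)
    -- terminal condition
    (hterm : ∀ μ, IsP2 μ → U t μ = Φ μ)
    -- `flow s μ r` is the law at time `r` of the McKean–Vlasov SDE started at time `s`
    -- from law `μ`
    (hflow0 : ∀ s μ, flow s μ s = μ)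
    (hflowP2 : ∀ s μ r, IsP2 μ → IsP2 (flow s μ r))
    -- Itô's formula along the flow of measures
    (hIto : ∀ s ∈ Set.Icc (0 : ℝ) t, ∀ μ, IsP2 μ → ∀ r ∈ Set.Icc s t,
      HasDerivAt (fun r' => U r' (flow s μ r'))
        (dsU r (flow s μ r) + mvOperator d b a DU DvDU r (flow s μ r)) r) :
    ∀ s ∈ Set.Icc (0 : ℝ) t, ∀ μ, IsP2 μ → U s μ = Φ (flow s μ t) := by
  intro s hs μ hμ
  obtain ⟨hs0, hst⟩ := hs
  set f : ℝ → ℝ := fun r => U r (flow s μ r) with hf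
  have hderiv : ∀ r ∈ Set.Icc s t, HasDerivAt f
      (dsU r (flow s μ r) + mvOperator d b a DU DvDU r (flow s μ r)) r :=
    hIto s ⟨hs0, hst⟩ μ hμ
  have hcont : ContinuousOn f (Set.Icc s t) := fun r hr =>
    ((hderiv r hr).continuousAt).continuousWithinAt
  have hzero : ∀ r ∈ Set.Ico s t, HasDerivWithinAt f 0 (Set.Ici r) r := by
    intro r hr
    have hP2 := hflowP2 s μ r hμ
    have h0 := hPDE r ⟨le_trans hs0 hr.1, hr.2⟩ (flow s μ r) hP2
    have := hderiv r ⟨hr.1, hr.2.le⟩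
    rw [h0] at this
    exact this.hasDerivWithinAt
  have hconst := constant_of_has_deriv_right_zero hcont hzero t ⟨hst, le_refl t⟩
  have hfs : f s = U s μ := by simp [hf, hflow0]
  have hft : f t = Φ (flow s μ t) := hterm _ (hflowP2 s μ t hμ)
  rw [← hfs, ← hft, hconst]
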